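/- There exists a constant C such that for all real x with |x| > 3, ∫_ℝ e^{-|z|} (1+|x-z|)^{-1} e^{-|x-z|} dz ≤ C e^{-|x|} log(1+|x|). -/
import Mathlib

open MeasureTheory Real Set

private lemma integrable_exp_neg_abs' : Integrable (fun z : ℝ => Real.exp (-|z|)) := by
  rw [← integrableOn_univ, ← Iic_union_Ioi (a := (0:ℝ)), integrableOn_union]
  constructor
  · exact (integrableOn_exp_Iic 0).congr_fun
      (fun z hz => by rw [abs_of_nonpos (mem_Iic.mp hz), neg_neg]) measurableSet_Iic
  · exact (exp_neg_integrableOn_Ioi 0 one_pos).congr_fun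
      (fun z hz => by norm_num [abs_of_pos (mem_Ioi.mp hz)]) measurableSet_Ioi

private lemma cont_f (x : ℝ) :
    Continuous (fun z : ℝ => Real.exp (-|z|) * (1 + |x - z|)⁻¹ * Real.exp (-|x - z|)) := by
  have h1 : Continuous fun z : ℝ => 1 + |x - z| := by continuity
  have h2 : ∀ z : ℝ, (1 + |x - z|) ≠ 0 := fun z => by positivity
  exact ((continuous_abs.neg.rexp).mul (h1.inv₀ h2)).mul
    (((continuous_const.sub continuous_id).abs.neg).rexp)

private lemma f_le (x : ℝ) (z : ℝ) :
    Real.exp (-|z|) * (1 + |x - z|)⁻¹ * Real.exp (-|x - z|) ≤ Real.exp (-|z|) := by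
  have h1 : (1 + |x - z|)⁻¹ ≤ 1 := by
    rw [inv_le_one_iff₀]; right; linarith [abs_nonneg (x - z)]
  have h2 : Real.exp (-|x - z|) ≤ 1 := by
    rw [Real.exp_le_one_iff]; simp [abs_nonneg]
  calc Real.exp (-|z|) * (1 + |x - z|)⁻¹ * Real.exp (-|x - z|)
      ≤ Real.exp (-|z|) * 1 * 1 := by
        apply mul_le_mul (mul_le_mul_of_nonneg_left h1 (Real.exp_pos _).le) h2
          (Real.exp_pos _).le
        positivity
    _ = Real.exp (-|z|) := by ring

private lemma f_nonneg (x z : ℝ) :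
    0 ≤ Real.exp (-|z|) * (1 + |x - z|)⁻¹ * Real.exp (-|x - z|) := by
  have : (0:ℝ) < 1 + |x - z| := by positivity
  positivity

private lemma integrable_f (x : ℝ) :
    Integrable (fun z : ℝ => Real.exp (-|z|) * (1 + |x - z|)⁻¹ * Real.exp (-|x - z|)) := by
  refine integrable_exp_neg_abs'.mono ((cont_f x).aestronglyMeasurable) ?_
  filter_upwards with z
  rw [Real.norm_eq_abs, Real.norm_eq_abs, abs_of_nonneg (f_nonneg x z),
    abs_of_nonneg (Real.exp_pos _).le]
  exact f_le x z

private lemma key (x : ℝ) (hx : 3 < x) :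
    ∫ z : ℝ, Real.exp (-|z|) * (1 + |x - z|)⁻¹ * Real.exp (-|x - z|) ≤
      3 * Real.exp (-x) * Real.log (1 + x) := by
  set f : ℝ → ℝ := fun z => Real.exp (-|z|) * (1 + |x - z|)⁻¹ * Real.exp (-|x - z|) with hf
  have hx0 : (0:ℝ) < x := by linarith
  have hint := integrable_f x
  -- split the integral
  have hsplit1 : ∫ z, f z = (∫ z in Iic (0:ℝ), f z) + ∫ z in Ioi (0:ℝ), f z :=
    (intervalIntegral.integral_Iic_add_Ioi hint.integrableOn hint.integrableOn).symm
  have hunion : Ioc (0:ℝ) x ∪ Ioi x = Ioi 0 := Ioc_union_Ioi_eq_Ioi hx0.le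
  have hsplit2 : ∫ z in Ioi (0:ℝ), f z = (∫ z in Ioc (0:ℝ) x, f z) + ∫ z in Ioi x, f z := by
    rw [← hunion, setIntegral_union (Ioc_disjoint_Ioi le_rfl) measurableSet_Ioi
      hint.integrableOn hint.integrableOn]
  -- piece 1 : Iic 0
  have h1 : ∫ z in Iic (0:ℝ), f z ≤ Real.exp (-x) * 1 := by
    have hb : ∀ z ∈ Iic (0:ℝ), f z ≤ Real.exp (-x) * Real.exp z := by
      intro z hz
      have hz0 : z ≤ 0 := mem_Iic.mp hz
      have hxz : |x - z| = x - z := abs_of_pos (by linarith)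
      have hzz : |z| = -z := abs_of_nonpos hz0
      have := f_le x z
      calc f z ≤ Real.exp (-|z|) * Real.exp (-|x - z|) := by
            rw [hf]
            have h1 : (1 + |x - z|)⁻¹ ≤ 1 := by
              rw [inv_le_one_iff₀]; right; linarith [abs_nonneg (x - z)]
            calc Real.exp (-|z|) * (1 + |x - z|)⁻¹ * Real.exp (-|x - z|)
                ≤ Real.exp (-|z|) * 1 * Real.exp (-|x - z|) := by
                  apply mul_le_mul_of_nonneg_right
                    (mul_le_mul_of_nonneg_left h1 (Real.exp_pos _).le) (Real.exp_pos _).le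
              _ = Real.exp (-|z|) * Real.exp (-|x - z|) := by ring
        _ = Real.exp (-x) * Real.exp (2 * z) := by
            rw [hzz, hxz, ← Real.exp_add, ← Real.exp_add]; ring_nf
        _ ≤ Real.exp (-x) * Real.exp z := by
            apply mul_le_mul_of_nonneg_left _ (Real.exp_pos _).le
            exact Real.exp_le_exp.mpr (by linarith)
    calc ∫ z in Iic (0:ℝ), f z
        ≤ ∫ z in Iic (0:ℝ), Real.exp (-x) * Real.exp z := by
          apply setIntegral_mono_on hint.integrableOn
            (((integrableOn_exp_Iic 0).const_mul _)) measurableSet_Iic hb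
      _ = Real.exp (-x) * ∫ z in Iic (0:ℝ), Real.exp z := by rw [integral_const_mul]
      _ = Real.exp (-x) * 1 := by rw [integral_exp_Iic_zero]
  -- piece 2 : Ioc 0 x
  have h2 : ∫ z in Ioc (0:ℝ) x, f z = Real.exp (-x) * Real.log (1 + x) := by
    have heq : EqOn f (fun z => Real.exp (-x) * (1 + x - z)⁻¹) (Ioc (0:ℝ) x) := by
      intro z hz
      obtain ⟨hz0, hzx⟩ := hz
      have hzz : |z| = z := abs_of_pos hz0
      have hxz : |x - z| = x - z := abs_of_nonneg (by linarith)
      simp only [hf, hzz, hxz]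
      have e1 : Real.exp (-z) * Real.exp (-(x - z)) = Real.exp (-x) := by
        rw [← Real.exp_add]; ring_nf
      calc Real.exp (-z) * (1 + (x - z))⁻¹ * Real.exp (-(x - z))
          = (Real.exp (-z) * Real.exp (-(x - z))) * (1 + (x - z))⁻¹ := by ring
        _ = Real.exp (-x) * (1 + x - z)⁻¹ := by rw [e1]; ring_nf
    rw [setIntegral_congr_fun measurableSet_Ioc heq, integral_const_mul]
    congr 1
    rw [← intervalIntegral.integral_of_le hx0.le]
    have : ∀ z : ℝ, 1 + x - z = (1 + x) - z := fun z => by ring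
    have hcomp : (∫ z in (0:ℝ)..x, (1 + x - z)⁻¹) = ∫ u in (1+x-x)..(1+x-0), u⁻¹ := by
      rw [← intervalIntegral.integral_comp_sub_left (fun u => u⁻¹) (1+x)]
    rw [hcomp]
    have h1x : (1:ℝ) + x - x = 1 := by ring
    have h2x : (1:ℝ) + x - 0 = 1 + x := by ring
    rw [h1x, h2x, integral_inv (by
      intro h
      rcases h with h
      simp only [mem_uIcc] at h
      rcases h with ⟨h, _⟩ | ⟨_, h⟩ <;> linarith)]
    rw [div_one]
  -- piece 3 : Ioi x
  have h3 : ∫ z in Ioi x, f z ≤ Real.exp (-x) := by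
    have hb : ∀ z ∈ Ioi x, f z ≤ Real.exp (-z) := by
      intro z hz
      have hzx : x < z := mem_Ioi.mp hz
      have hzz : |z| = z := abs_of_pos (by linarith)
      calc f z ≤ Real.exp (-|z|) := f_le x z
        _ = Real.exp (-z) := by rw [hzz]
    calc ∫ z in Ioi x, f z ≤ ∫ z in Ioi x, Real.exp (-z) := by
          apply setIntegral_mono_on hint.integrableOn ?_ measurableSet_Ioi hb
          have := exp_neg_integrableOn_Ioi x one_pos
          simpa using this
      _ = Real.exp (-x) := integral_exp_neg_Ioi x
  -- log (1+x) ≥ 1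
  have hlog : (1:ℝ) ≤ Real.log (1 + x) := by
    rw [Real.le_log_iff_exp_le (by linarith)]
    have := Real.exp_one_lt_d9
    linarith
  have hexp : (0:ℝ) < Real.exp (-x) := Real.exp_pos _
  calc ∫ z, f z = (∫ z in Iic (0:ℝ), f z) + ((∫ z in Ioc (0:ℝ) x, f z) + ∫ z in Ioi x, f z) := by
        rw [hsplit1, hsplit2]
    _ ≤ Real.exp (-x) * 1 + (Real.exp (-x) * Real.log (1 + x) + Real.exp (-x)) := by
        apply add_le_add h1; apply add_le_add (le_of_eq h2) h3
    _ ≤ 3 * Real.exp (-x) * Real.log (1 + x) := by nlinarith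

/-- Lemma 1, case `κ = -1`, `m = -1`: for all `|x| > 3`,
`∫ e^{-|z|} (1+|x-z|)⁻¹ e^{-|x-z|} dz ≤ C e^{-|x|} log(1+|x|)`. -/
theorem integral_estimate_log :
    ∃ C : ℝ, 0 < C ∧ ∀ x : ℝ, 3 < |x| →
      ∫ z : ℝ, Real.exp (-|z|) * (1 + |x - z|)⁻¹ * Real.exp (-|x - z|) ≤
        C * Real.exp (-|x|) * Real.log (1 + |x|) := by
  refine ⟨3, by norm_num, fun x hx => ?_⟩
  rcases le_or_gt 0 x with hx0 | hx0
  · rw [abs_of_nonneg hx0] at hx ⊢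
    exact key x hx
  · rw [abs_of_neg hx0] at hx ⊢
    have hneg : (∫ z : ℝ, Real.exp (-|z|) * (1 + |x - z|)⁻¹ * Real.exp (-|x - z|)) =
        ∫ z : ℝ, Real.exp (-|z|) * (1 + |(-x) - z|)⁻¹ * Real.exp (-|(-x) - z|) := by
      rw [← integral_neg_eq_self (fun z : ℝ =>
        Real.exp (-|z|) * (1 + |(-x) - z|)⁻¹ * Real.exp (-|(-x) - z|))]
      congr 1
      ext z
      have h1 : |(-x) - (-z)| = |x - z| := by rw [← abs_neg]; ring_nf
      rw [abs_neg, h1]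
    rw [hneg]
    exact key (-x) hx
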